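/- arXiv:2505.21350 — 5 statements merged into one kernel-verified Lean document; each statement's English description precedes it below -/
import Mathlib

section
/- Let λ, μ : ℝ → ℝ be locally Lipschitz functions that are nonnegative on [0,1], set f(a) = (1 − a) λ(a) − a μ(a), and assume λ(0) > 0 and that there exists a* ∈ (0,1] with f(a*) = 0 and f(a) > 0 for all a ∈ [0, a*). Let â : [0,∞) → ℝ be the solution of the activation-fraction ODE with â(0) = 0. Then â is strictly increasing on [0,∞), â(t) < a* for all t ≥ 0, and â(t) → a* as t → ∞. -/
/-- Let `lam, mu` be locally Lipschitz and nonnegative on `[0,1]`, let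
`f a = (1 - a) * lam a - a * mu a`, assume `lam 0 > 0` and that there is `astar ∈ (0,1]`
with `f astar = 0` and `f a > 0` for all `a ∈ [0, astar)`. If `ahat` solves the
activation-fraction ODE with `ahat 0 = 0`, then `ahat` is strictly increasing on `[0,∞)`,
`ahat t < astar` for all `t ≥ 0`, and `ahat t → astar` as `t → ∞`. -/
theorem activation_fraction_monotone_limit
    (lam mu : ℝ → ℝ)
    (hlam : LocallyLipschitz lam) (hmu : LocallyLipschitz mu)
    (hlam_nonneg : ∀ a ∈ Set.Icc (0 : ℝ) 1, 0 ≤ lam a)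
    (hmu_nonneg : ∀ a ∈ Set.Icc (0 : ℝ) 1, 0 ≤ mu a)
    (hlam0 : 0 < lam 0)
    (astar : ℝ) (hastar : astar ∈ Set.Ioc (0 : ℝ) 1)
    (hfzero : (1 - astar) * lam astar - astar * mu astar = 0)
    (hfpos : ∀ a ∈ Set.Ico (0 : ℝ) astar, 0 < (1 - a) * lam a - a * mu a)
    (ahat : ℝ → ℝ) (h0 : ahat 0 = 0)
    (hode : ∀ t ≥ (0 : ℝ),
      HasDerivAt ahat ((1 - ahat t) * lam (ahat t) - ahat t * mu (ahat t)) t) :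
    StrictMonoOn ahat (Set.Ici (0 : ℝ)) ∧
    (∀ t ≥ (0 : ℝ), ahat t < astar) ∧
    Filter.Tendsto ahat Filter.atTop (nhds astar) := by
  obtain ⟨hastar_pos, hastar_le⟩ := hastar
  have hcont : ContinuousOn ahat (Set.Ici 0) :=
    fun t ht => (hode t ht).continuousAt.continuousWithinAt
  -- Step 1 : nonnegativity
  have hnn : ∀ t ≥ (0:ℝ), 0 ≤ ahat t := by
    intro t ht
    by_contra hneg
    push_neg at hneg
    have htpos : 0 < t := by
      rcases eq_or_lt_of_le ht with h | h
      · exfalso; rw [← h, h0] at hneg; exact lt_irrefl 0 hneg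
      · exact h
    set S : Set ℝ := Set.Icc 0 t ∩ ahat ⁻¹' {0} with hS
    have hScl : IsClosed S :=
      (hcont.mono Set.Icc_subset_Ici_self).preimage_isClosed_of_isClosed
        isClosed_Icc isClosed_singleton
    have hScp : IsCompact S := isCompact_Icc.of_isClosed_subset hScl Set.inter_subset_left
    have hSne : S.Nonempty := ⟨0, ⟨le_refl 0, htpos.le⟩, by simp [h0]⟩
    have hT0mem : sSup S ∈ S := hScp.sSup_mem hSne
    set T0 := sSup S with hT0def
    obtain ⟨⟨hT0a, hT0b⟩, hT0zmem⟩ := hT0mem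
    have hT0z : ahat T0 = 0 := hT0zmem
    have hT0t : T0 < t := by
      rcases eq_or_lt_of_le hT0b with h | h
      · exfalso; rw [h] at hT0z; rw [hT0z] at hneg; exact lt_irrefl 0 hneg
      · exact h
    have hneg' : ∀ s ∈ Set.Ioc T0 t, ahat s < 0 := by
      intro s hs
      rcases lt_trichotomy (ahat s) 0 with h | h | h
      · exact h
      · exfalso
        have hsS : s ∈ S := ⟨⟨le_trans hT0a hs.1.le, hs.2⟩, by simp [h]⟩
        exact absurd (le_csSup hScp.bddAbove hsS) (not_le.2 hs.1)
      · exfalso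
        have hst : s ≤ t := hs.2
        have hmem : (0:ℝ) ∈ Set.Icc (ahat t) (ahat s) := ⟨hneg.le, h.le⟩
        have hsub : Set.Icc s t ⊆ Set.Ici (0:ℝ) := fun u hu =>
          le_trans (le_trans hT0a hs.1.le) hu.1
        obtain ⟨u, hu, hu0⟩ := intermediate_value_Icc' hst (hcont.mono hsub) hmem
        have huS : u ∈ S := ⟨⟨le_trans (le_trans hT0a hs.1.le) hu.1, hu.2⟩, by simp [hu0]⟩
        exact absurd (le_csSup hScp.bddAbove huS) (not_le.2 (lt_of_lt_of_le hs.1 hu.1))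
    have hd := hode T0 hT0a
    rw [hT0z] at hd
    have hdval : HasDerivAt ahat (lam 0) T0 := by simpa using hd
    have hslope := hasDerivAt_iff_tendsto_slope.mp hdval
    have hle : nhdsWithin T0 (Set.Ioi T0) ≤ nhdsWithin T0 {T0}ᶜ :=
      nhdsWithin_mono _ (fun z hz => ne_of_gt hz)
    have hpos : ∀ᶠ z in nhdsWithin T0 (Set.Ioi T0), 0 < slope ahat T0 z :=
      (hslope.mono_left hle).eventually (eventually_gt_nhds hlam0)
    have hmem : Set.Ioc T0 t ∈ nhdsWithin T0 (Set.Ioi T0) :=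
      Ioc_mem_nhdsGT_of_mem ⟨le_refl T0, hT0t⟩
    obtain ⟨z, hz1, hz2⟩ := (hpos.and (Filter.eventually_of_mem hmem (fun z hz => hz))).exists
    have hz0 : 0 < z - T0 := sub_pos.2 hz2.1
    rw [slope_def_field] at hz1
    have hnum : 0 < ahat z - ahat T0 := by
      have h1 := mul_pos hz1 hz0
      rwa [div_mul_cancel₀ _ (ne_of_gt hz0)] at h1
    have := hneg' z hz2
    rw [hT0z] at hnum
    linarith
  -- Step 2 : one-sided Lipschitz-type bound near astar
  have hKbound : ∃ K : ℝ, 0 ≤ K ∧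
      ∀ a ∈ Set.Icc (0:ℝ) astar, (1-a)*lam a - a*mu a ≤ K * (astar - a) := by
    obtain ⟨Kl, tl, htl, hKl⟩ := hlam astar
    obtain ⟨Km, tm, htm, hKm⟩ := hmu astar
    obtain ⟨δ, hδpos, hδ⟩ := Metric.mem_nhds_iff.mp (Filter.inter_mem htl htm)
    have hFc : ContinuousOn (fun a : ℝ => (1-a)*lam a - a*mu a) (Set.Icc 0 astar) :=
      (((continuous_const.sub continuous_id).mul hlam.continuous).sub
        (continuous_id.mul hmu.continuous)).continuousOn
    obtain ⟨x, hx, hmax⟩ := isCompact_Icc.exists_isMaxOn ⟨0, le_refl 0, hastar_pos.le⟩ hFc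
    set M : ℝ := (1-x)*lam x - x*mu x with hM
    have hMb : ∀ a ∈ Set.Icc (0:ℝ) astar, (1-a)*lam a - a*mu a ≤ M :=
      fun a ha => isMaxOn_iff.mp hmax a ha
    have hM0 : 0 ≤ M := by
      have := hMb 0 ⟨le_refl 0, hastar_pos.le⟩
      simp at this
      linarith
    have hlamstar : 0 ≤ lam astar := hlam_nonneg astar ⟨hastar_pos.le, hastar_le⟩
    have hmustar : 0 ≤ mu astar := hmu_nonneg astar ⟨hastar_pos.le, hastar_le⟩
    set K1 : ℝ := (Kl:ℝ) + (Km:ℝ) + lam astar + mu astar with hK1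
    refine ⟨max K1 (max (M/δ) 0), le_max_of_le_right (le_max_right _ _), ?_⟩
    intro a ha
    have ha1 : a ≤ 1 := le_trans ha.2 hastar_le
    have hax : astar - a ≥ 0 := by linarith [ha.2]
    by_cases hball : a ∈ Metric.ball astar δ
    · have hal : a ∈ tl := (hδ hball).1
      have ham : a ∈ tm := (hδ hball).2
      have hstar_l : astar ∈ tl := mem_of_mem_nhds htl
      have hstar_m : astar ∈ tm := mem_of_mem_nhds htm
      have habs : |a - astar| = astar - a := by
        rw [abs_of_nonpos (by linarith [ha.2]), neg_sub]
      have halip : |lam a - lam astar| ≤ (Kl:ℝ) * (astar - a) := by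
        have h1 := hKl.dist_le_mul a hal astar hstar_l
        rw [Real.dist_eq, Real.dist_eq, habs] at h1
        exact h1
      have hamip : |mu a - mu astar| ≤ (Km:ℝ) * (astar - a) := by
        have h1 := hKm.dist_le_mul a ham astar hstar_m
        rw [Real.dist_eq, Real.dist_eq, habs] at h1
        exact h1
      have hKl0 : (0:ℝ) ≤ (Kl:ℝ) * (astar - a) := le_trans (abs_nonneg _) halip
      have hKm0 : (0:ℝ) ≤ (Km:ℝ) * (astar - a) := le_trans (abs_nonneg _) hamip
      have t1b : (1-a)*(lam a - lam astar) ≤ (Kl:ℝ)*(astar - a) := by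
        calc (1-a)*(lam a - lam astar) ≤ (1-a) * ((Kl:ℝ)*(astar-a)) :=
              mul_le_mul_of_nonneg_left ((le_abs_self _).trans halip) (by linarith)
          _ ≤ 1 * ((Kl:ℝ)*(astar-a)) := mul_le_mul_of_nonneg_right (by linarith [ha.1]) hKl0
          _ = (Kl:ℝ)*(astar-a) := one_mul _
      have t2b : -(a*(mu a - mu astar)) ≤ (Km:ℝ)*(astar - a) := by
        calc -(a*(mu a - mu astar)) = a * (-(mu a - mu astar)) := by ring
          _ ≤ a * ((Km:ℝ)*(astar-a)) :=
              mul_le_mul_of_nonneg_left ((neg_le_abs _).trans hamip) ha.1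
          _ ≤ 1 * ((Km:ℝ)*(astar-a)) := mul_le_mul_of_nonneg_right ha1 hKm0
          _ = (Km:ℝ)*(astar-a) := one_mul _
      have expand : (1-a)*lam a - a*mu a
          = (1-a)*(lam a - lam astar) + (-(a*(mu a - mu astar)))
            + (astar - a)*(lam astar + mu astar)
            + ((1-astar)*lam astar - astar*mu astar) := by ring
      have t3b : (astar - a)*(lam astar + mu astar) ≤ (lam astar + mu astar) * (astar - a) := by
        rw [mul_comm]
      have hfin : (1-a)*lam a - a*mu a ≤ K1 * (astar - a) := by
        rw [expand, hfzero, hK1]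
        nlinarith [t1b, t2b]
      calc (1-a)*lam a - a*mu a ≤ K1 * (astar - a) := hfin
        _ ≤ max K1 (max (M/δ) 0) * (astar - a) :=
            mul_le_mul_of_nonneg_right (le_max_left _ _) hax
    · have hfar : δ ≤ astar - a := by
        have h1 : ¬ |a - astar| < δ := by
          simpa [Metric.mem_ball, Real.dist_eq] using hball
        have h2 := not_lt.mp h1
        rwa [abs_of_nonpos (by linarith [ha.2]), neg_sub] at h2
      calc (1-a)*lam a - a*mu a ≤ M := hMb a ha
        _ = (M/δ) * δ := by field_simp
        _ ≤ (M/δ) * (astar - a) := mul_le_mul_of_nonneg_left hfar (div_nonneg hM0 hδpos.le)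
        _ ≤ max K1 (max (M/δ) 0) * (astar - a) :=
            mul_le_mul_of_nonneg_right (le_max_of_le_right (le_max_left _ _)) hax
  -- Step 3 : ahat stays below astar
  have hlt : ∀ t ≥ (0:ℝ), ahat t < astar := by
    intro t ht
    by_contra hge
    push_neg at hge
    have htpos : 0 < t := by
      rcases eq_or_lt_of_le ht with h | h
      · exfalso; rw [← h, h0] at hge; linarith
      · exact h
    set S : Set ℝ := Set.Icc 0 t ∩ ahat ⁻¹' {astar} with hS
    have hScl : IsClosed S :=
      (hcont.mono Set.Icc_subset_Ici_self).preimage_isClosed_of_isClosed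
        isClosed_Icc isClosed_singleton
    have hScp : IsCompact S := isCompact_Icc.of_isClosed_subset hScl Set.inter_subset_left
    have hSne : S.Nonempty := by
      have hmem : astar ∈ Set.Icc (ahat 0) (ahat t) := ⟨by rw [h0]; exact hastar_pos.le, hge⟩
      obtain ⟨u, hu, hu'⟩ :=
        intermediate_value_Icc htpos.le (hcont.mono Set.Icc_subset_Ici_self) hmem
      exact ⟨u, hu, by simp [hu']⟩
    have ht1mem : sInf S ∈ S := hScp.sInf_mem hSne
    set t1 := sInf S with ht1def
    obtain ⟨⟨ht1a, ht1b⟩, ht1zmem⟩ := ht1mem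
    have hT1 : ahat t1 = astar := ht1zmem
    have ht1pos : 0 < t1 := by
      rcases eq_or_lt_of_le ht1a with h | h
      · exfalso; rw [← h, h0] at hT1; linarith
      · exact h
    have hbelow : ∀ s ∈ Set.Icc 0 t1, ahat s ≤ astar := by
      intro s hs
      by_contra hgt
      push_neg at hgt
      have hmem : astar ∈ Set.Icc (ahat 0) (ahat s) := ⟨by rw [h0]; exact hastar_pos.le, hgt.le⟩
      have hsub : Set.Icc (0:ℝ) s ⊆ Set.Ici 0 := fun u hu => hu.1
      obtain ⟨u, hu, hu'⟩ := intermediate_value_Icc hs.1 (hcont.mono hsub) hmem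
      have huS : u ∈ S := ⟨⟨hu.1, le_trans hu.2 (le_trans hs.2 ht1b)⟩, by simp [hu']⟩
      have h1 : t1 ≤ u := csInf_le hScp.bddBelow huS
      have h2 : u = s := le_antisymm hu.2 (le_trans hs.2 h1)
      rw [h2] at hu'
      linarith
    obtain ⟨K, hK0, hKb⟩ := hKbound
    set F' : ℝ → ℝ := fun s =>
      (1 - ahat (t1 - s)) * lam (ahat (t1 - s)) - ahat (t1 - s) * mu (ahat (t1 - s)) with hF'
    set h : ℝ → ℝ := fun s => astar - ahat (t1 - s) with hh
    have hconth : ContinuousOn h (Set.Icc 0 t1) := by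
      apply continuousOn_const.sub
      exact hcont.comp ((continuous_const.sub continuous_id).continuousOn)
        (fun s hs => by simp only [Set.mem_Ici]; linarith [hs.2])
    have hder : ∀ s ∈ Set.Ico (0:ℝ) t1, HasDerivWithinAt h (F' s) (Set.Ici s) s := by
      intro s hs
      have hts : (0:ℝ) ≤ t1 - s := by linarith [hs.2]
      have hd := hode (t1 - s) hts
      have hg : HasDerivAt (fun u : ℝ => t1 - u) (-1) s := by
        simpa using (hasDerivAt_id s).const_sub t1
      have hcomp := HasDerivAt.comp s hd hg
      have hfin := hcomp.const_sub astar
      have heq : h = fun u => astar - (ahat ∘ fun u : ℝ => t1 - u) u := rfl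
      rw [heq]
      have : F' s = -(((1 - ahat (t1 - s)) * lam (ahat (t1 - s))
          - ahat (t1 - s) * mu (ahat (t1 - s))) * (-1)) := by rw [hF']; ring
      rw [this]
      exact hfin.hasDerivWithinAt
    have hbound : ∀ s ∈ Set.Ico (0:ℝ) t1, ‖F' s‖ ≤ K * ‖h s‖ + 0 := by
      intro s hs
      have hts0 : (0:ℝ) ≤ t1 - s := by linarith [hs.2]
      have hts1 : t1 - s ≤ t1 := by linarith [hs.1]
      have hale : ahat (t1 - s) ≤ astar := hbelow _ ⟨hts0, hts1⟩
      have hage : 0 ≤ ahat (t1 - s) := hnn _ hts0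
      have hF's : F' s = (1 - ahat (t1 - s)) * lam (ahat (t1 - s))
          - ahat (t1 - s) * mu (ahat (t1 - s)) := rfl
      have hFnonneg : 0 ≤ F' s := by
        rw [hF's]
        rcases eq_or_lt_of_le hale with heq | hlt'
        · rw [heq]
          exact le_of_eq hfzero.symm
        · exact (hfpos _ ⟨hage, hlt'⟩).le
      have hhval : h s = astar - ahat (t1 - s) := rfl
      have hhnonneg : 0 ≤ h s := by rw [hhval]; linarith
      rw [Real.norm_eq_abs, Real.norm_eq_abs, abs_of_nonneg hFnonneg, abs_of_nonneg hhnonneg]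
      have hkey := hKb (ahat (t1 - s)) ⟨hage, hale⟩
      rw [hF's, hhval]
      linarith
    have hstart : ‖h 0‖ ≤ 0 := by
      have : h 0 = 0 := by simp [hh, hT1]
      simp [this]
    have hfinal := norm_le_gronwallBound_of_norm_deriv_right_le hconth hder hstart hbound t1
      ⟨ht1pos.le, le_refl t1⟩
    rw [gronwallBound_ε0_δ0] at hfinal
    have : h t1 = astar := by simp [hh, h0]
    rw [this, Real.norm_eq_abs, abs_of_pos hastar_pos] at hfinal
    linarith
  -- Step 4 : strict monotonicity
  have hsm : StrictMonoOn ahat (Set.Ici 0) := by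
    apply strictMonoOn_of_deriv_pos (convex_Ici 0) hcont
    intro x hx
    rw [interior_Ici] at hx
    rw [(hode x hx.le).deriv]
    exact hfpos _ ⟨hnn x hx.le, hlt x hx.le⟩
  -- Step 5 : convergence
  have hreach : ∀ ε > (0:ℝ), ∃ t0 ≥ (0:ℝ), astar - ε < ahat t0 := by
    intro ε hε
    by_contra hcon
    push_neg at hcon
    have h0le : (0:ℝ) ≤ astar - ε := by
      have := hcon 0 le_rfl
      rw [h0] at this
      linarith
    have hFcont : ContinuousOn (fun a : ℝ => (1-a)*lam a - a*mu a) (Set.Icc 0 (astar - ε)) :=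
      (((continuous_const.sub continuous_id).mul hlam.continuous).sub
        (continuous_id.mul hmu.continuous)).continuousOn
    obtain ⟨a0, ha0, hmin⟩ := isCompact_Icc.exists_isMinOn ⟨0, le_rfl, h0le⟩ hFcont
    set c : ℝ := (1-a0)*lam a0 - a0*mu a0 with hc
    have hcpos : 0 < c := hfpos a0 ⟨ha0.1, by linarith [ha0.2]⟩
    set g : ℝ → ℝ := fun u => ahat u - c * u with hg
    have hgmono : MonotoneOn g (Set.Ici 0) := by
      apply monotoneOn_of_deriv_nonneg (convex_Ici 0)
      · exact hcont.sub ((continuous_const.mul continuous_id).continuousOn)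
      · intro x hx
        rw [interior_Ici] at hx
        exact ((hode x hx.le).sub ((hasDerivAt_id x).const_mul c)).differentiableAt.differentiableWithinAt
      · intro x hx
        rw [interior_Ici] at hx
        have hdg : HasDerivAt g ((1 - ahat x)*lam (ahat x) - ahat x*mu (ahat x) - c * 1) x :=
          (hode x hx.le).sub ((hasDerivAt_id x).const_mul c)
        rw [hdg.deriv]
        have hx0 : 0 ≤ ahat x := hnn x hx.le
        have hxle : ahat x ≤ astar - ε := hcon x hx.le
        have := isMinOn_iff.mp hmin (ahat x) ⟨hx0, hxle⟩
        linarith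
    have hgrow : ∀ u ≥ (0:ℝ), c * u ≤ ahat u := by
      intro u hu
      have h1 := hgmono (Set.self_mem_Ici) (Set.mem_Ici.mpr hu) hu
      have h2 : g 0 = 0 := by simp [hg, h0]
      have h3 : g u = ahat u - c * u := rfl
      rw [h2, h3] at h1
      linarith
    set T : ℝ := (astar + 1)/c with hT
    have hT0 : 0 ≤ T := div_nonneg (by linarith) hcpos.le
    have h1 := hgrow T hT0
    have h2 := hcon T hT0
    have h3 : c * T = astar + 1 := by
      rw [hT]
      field_simp
    linarith
  refine ⟨hsm, hlt, ?_⟩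
  rw [Metric.tendsto_atTop]
  intro ε hε
  obtain ⟨t0, ht0, ht0'⟩ := hreach ε hε
  refine ⟨t0, fun t ht => ?_⟩
  have htnn : (0:ℝ) ≤ t := le_trans ht0 ht
  have hmono : ahat t0 ≤ ahat t :=
    hsm.monotoneOn (Set.mem_Ici.mpr ht0) (Set.mem_Ici.mpr htnn) ht
  have hlt' := hlt t htnn
  rw [Real.dist_eq, abs_of_nonpos (by linarith)]
  linarith
end

section
/- Let λ, μ : ℝ → ℝ be locally Lipschitz functions that are nonnegative on [0,1], set f(a) = (1 − a) λ(a) − a μ(a), and assume λ(0) > 0 and that there exists a* ∈ (0,1] with f(a*) = 0 and f(a) > 0 for all a ∈ [0, a*). Let â be the solution of the activation-fraction ODE with â(0) = 0, and for γ ∈ (0,1) define the trigger time τ̂^γ = inf{t ≥ 0 : â(t) ≥ γ}. Then: (i) for every γ ∈ (0, a*) the trigger time τ̂^γ is finite; (ii) for every γ with a* < γ < 1 the set {t ≥ 0 : â(t) ≥ γ} is empty, i.e. τ̂^γ = ∞. -/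
/-!
The fraction `â` starts at `0`, cannot go below `0` because the rate `f` is positive there, and
cannot cross the equilibrium `a*`: by the intermediate value theorem it would have to pass through
`a*`, and from then on uniqueness of solutions (`f` is Lipschitz on the compact range of `â`) pins
it to the constant solution. This gives (ii). For (i), while `â` stays in `[0, γ]` its derivative
is at least the positive minimum of `f` on `[0, γ]`, so `â` reaches `γ` in finite time.
-/

open Set

def activationRate (lam mu : ℝ → ℝ) (a : ℝ) : ℝ := (1 - a) * lam a - a * mu a

theorem LocallyLipschitz.mul' {α 𝕜 : Type*} [PseudoEMetricSpace α] [RCLike 𝕜] {f g : α → 𝕜}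
    (hf : LocallyLipschitz f) (hg : LocallyLipschitz g) : LocallyLipschitz fun x ↦ f x * g x :=
  (contDiff_mul (𝕜 := 𝕜)).locallyLipschitz.comp (hf.prodMk hg)

theorem LocallyLipschitz.activationRate {lam mu : ℝ → ℝ} (hlam : LocallyLipschitz lam)
    (hmu : LocallyLipschitz mu) : LocallyLipschitz (activationRate lam mu) :=
  (((LocallyLipschitz.const 1).sub LocallyLipschitz.id).mul' hlam).sub
    (LocallyLipschitz.id.mul' hmu)

section AutonomousODE

variable {f a : ℝ → ℝ} {t₀ t : ℝ}

theorem solution_le_of_equilibrium {c : ℝ} (hf : LocallyLipschitz f) (hc : f c = 0)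
    (ha : ∀ t ≥ t₀, HasDerivAt a (f (a t)) t) (h₀ : a t₀ ≤ c) (ht : t₀ ≤ t) : a t ≤ c := by
  by_contra! hlt
  have hcont : ContinuousOn a (Icc t₀ t) := fun s hs ↦ (ha s hs.1).continuousAt.continuousWithinAt
  obtain ⟨s, hs, has⟩ : c ∈ a '' Icc t₀ t := intermediate_value_Icc ht hcont ⟨h₀, hlt.le⟩
  obtain ⟨K, hK⟩ := hf.locallyLipschitzOn.exists_lipschitzOnWith_of_compact
    (isCompact_Icc.image_of_continuousOn hcont)
  have hconst : EqOn a (fun _ ↦ c) (Icc s t) :=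
    ODE_solution_unique_of_mem_Icc_right (v := fun _ ↦ f) (s := fun _ ↦ a '' Icc t₀ t)
      (fun _ _ ↦ hK) (hcont.mono (Icc_subset_Icc_left hs.1))
      (fun u hu ↦ (ha u (hs.1.trans hu.1)).hasDerivWithinAt)
      (fun u hu ↦ mem_image_of_mem a ⟨hs.1.trans hu.1, hu.2.le⟩) continuousOn_const
      (fun u _ ↦ hc ▸ hasDerivWithinAt_const u _ c) (fun _ _ ↦ ⟨s, hs, has⟩) has
  exact hlt.ne' (hconst ⟨hs.2, le_rfl⟩)

theorem solution_ge_of_pos {b : ℝ} (hb : 0 < f b) (ha : ∀ t ≥ t₀, HasDerivAt a (f (a t)) t)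
    (h₀ : b ≤ a t₀) (ht : t₀ ≤ t) : b ≤ a t :=
  image_le_of_deriv_right_lt_deriv_boundary' continuousOn_const
    (fun x _ ↦ hasDerivWithinAt_const x _ b) h₀
    (fun s hs ↦ (ha s hs.1).continuousAt.continuousWithinAt)
    (fun s hs ↦ (ha s hs.1).hasDerivWithinAt) (fun _ _ hx ↦ hx ▸ hb) ⟨ht, le_rfl⟩

theorem exists_solution_ge_of_pos_on_Icc {b γ : ℝ} (hf : ContinuousOn f (Icc b γ))
    (hpos : ∀ x ∈ Icc b γ, 0 < f x) (ha : ∀ t ≥ t₀, HasDerivAt a (f (a t)) t)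
    (hb : ∀ t ≥ t₀, b ≤ a t) : ∃ t ≥ t₀, γ ≤ a t := by
  by_contra! hlt
  have hmem : ∀ t ≥ t₀, a t ∈ Icc b γ := fun t ht ↦ ⟨hb t ht, (hlt t ht).le⟩
  obtain ⟨x, hx, hmin⟩ := isCompact_Icc.exists_isMinOn ⟨a t₀, hmem t₀ le_rfl⟩ hf
  have hm : 0 < f x := hpos x hx
  have hgrowth : ∀ t ≥ t₀, f x * (t - t₀) ≤ a t - a t₀ := by
    intro t ht
    refine (convex_Ici t₀).mul_sub_le_image_sub_of_le_deriv
      (fun s hs ↦ (ha s hs).continuousAt.continuousWithinAt) ?_ ?_ t₀ self_mem_Ici t ht ht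
    · rw [interior_Ici]
      exact fun s hs ↦ (ha s (le_of_lt hs)).differentiableAt.differentiableWithinAt
    · rw [interior_Ici]
      intro s hs
      rw [(ha s (le_of_lt hs)).deriv]
      exact isMinOn_iff.mp hmin _ (hmem s (le_of_lt hs))
  have hbγ : b ≤ γ := (hmem t₀ le_rfl).1.trans (hmem t₀ le_rfl).2
  set T := t₀ + (γ - b) / f x
  have hT : t₀ ≤ T := le_add_of_nonneg_right (div_nonneg (sub_nonneg.mpr hbγ) hm.le)
  have hslope : f x * (T - t₀) = γ - b := by rw [add_sub_cancel_left, mul_div_cancel₀ _ hm.ne']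
  linarith [hgrowth T hT, hb t₀ le_rfl, hlt T hT]

end AutonomousODE

theorem activation_fraction_trigger_time_general
    (lam mu : ℝ → ℝ)
    (hlam : LocallyLipschitz lam) (hmu : LocallyLipschitz mu)
    (astar : ℝ) (hastar : astar ∈ Set.Ioc (0 : ℝ) 1)
    (hfzero : (1 - astar) * lam astar - astar * mu astar = 0)
    (hfpos : ∀ a ∈ Set.Ico (0 : ℝ) astar, 0 < (1 - a) * lam a - a * mu a)
    (ahat : ℝ → ℝ) (h0 : ahat 0 = 0)
    (hode : ∀ t ≥ (0 : ℝ),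
      HasDerivAt ahat ((1 - ahat t) * lam (ahat t) - ahat t * mu (ahat t)) t) :
    (∀ γ ∈ Set.Ioo (0 : ℝ) astar,
      {t : ℝ | 0 ≤ t ∧ γ ≤ ahat t}.Nonempty) ∧
    (∀ γ : ℝ, astar < γ → γ < 1 →
      {t : ℝ | 0 ≤ t ∧ γ ≤ ahat t} = ∅) := by
  have hf : LocallyLipschitz (activationRate lam mu) := hlam.activationRate hmu
  have hnonneg : ∀ t ≥ 0, 0 ≤ ahat t := fun t ht ↦
    solution_ge_of_pos (f := activationRate lam mu) (hfpos 0 ⟨le_rfl, hastar.1⟩) hode h0.ge ht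
  have hle : ∀ t ≥ 0, ahat t ≤ astar := fun t ht ↦
    solution_le_of_equilibrium hf hfzero hode (h0.trans_le hastar.1.le) ht
  refine ⟨fun γ hγ ↦ ?_, fun γ hγ _ ↦ ?_⟩
  · obtain ⟨t, ht, hγt⟩ := exists_solution_ge_of_pos_on_Icc (f := activationRate lam mu)
      hf.continuous.continuousOn (fun x hx ↦ hfpos x ⟨hx.1, hx.2.trans_lt hγ.2⟩) hode hnonneg
    exact ⟨t, ht, hγt⟩
  · exact eq_empty_iff_forall_notMem.mpr fun t ⟨ht, hγt⟩ ↦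
      (hle t ht).not_gt (hγ.trans_le hγt)

/-- Under the hypotheses of Statement 1, for the trigger time
`τ̂^γ = inf {t ≥ 0 : ahat t ≥ γ}` one has:
(i) for every `γ ∈ (0, astar)` the trigger time is finite, i.e. the set
`{t ≥ 0 : ahat t ≥ γ}` is nonempty;
(ii) for every `γ` with `astar < γ < 1` that set is empty, i.e. `τ̂^γ = ∞`. -/
theorem activation_fraction_trigger_time
    (lam mu : ℝ → ℝ)
    (hlam : LocallyLipschitz lam) (hmu : LocallyLipschitz mu)
    (hlam_nonneg : ∀ a ∈ Set.Icc (0 : ℝ) 1, 0 ≤ lam a)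
    (hmu_nonneg : ∀ a ∈ Set.Icc (0 : ℝ) 1, 0 ≤ mu a)
    (hlam0 : 0 < lam 0)
    (astar : ℝ) (hastar : astar ∈ Set.Ioc (0 : ℝ) 1)
    (hfzero : (1 - astar) * lam astar - astar * mu astar = 0)
    (hfpos : ∀ a ∈ Set.Ico (0 : ℝ) astar, 0 < (1 - a) * lam a - a * mu a)
    (ahat : ℝ → ℝ) (h0 : ahat 0 = 0)
    (hode : ∀ t ≥ (0 : ℝ),
      HasDerivAt ahat ((1 - ahat t) * lam (ahat t) - ahat t * mu (ahat t)) t) :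
    (∀ γ ∈ Set.Ioo (0 : ℝ) astar,
      {t : ℝ | 0 ≤ t ∧ γ ≤ ahat t}.Nonempty) ∧
    (∀ γ : ℝ, astar < γ → γ < 1 →
      {t : ℝ | 0 ≤ t ∧ γ ≤ ahat t} = ∅) :=
  activation_fraction_trigger_time_general lam mu hlam hmu astar hastar hfzero hfpos ahat h0 hode
end

section
/- Let λ, μ : ℝ → ℝ be locally Lipschitz functions that are nonnegative on [0,1], and assume in addition that λ(a) < μ(a) for every a ∈ (0,1]. Let â : [0,∞) → ℝ be the solution of the activation-fraction ODE with â(0) = 0. Then â(t) < 1/2 for every t ≥ 0. -/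
/-- Let `lam, mu` be locally Lipschitz, nonnegative on `[0,1]`, and with
`lam a < mu a` for every `a ∈ (0,1]`. If `ahat` solves the activation-fraction ODE with
`ahat 0 = 0`, then `ahat t < 1/2` for every `t ≥ 0`. -/
theorem activation_fraction_lt_half
    (lam mu : ℝ → ℝ)
    (hlam : LocallyLipschitz lam) (hmu : LocallyLipschitz mu)
    (hlam_nonneg : ∀ a ∈ Set.Icc (0 : ℝ) 1, 0 ≤ lam a)
    (hmu_nonneg : ∀ a ∈ Set.Icc (0 : ℝ) 1, 0 ≤ mu a)
    (hlt : ∀ a ∈ Set.Ioc (0 : ℝ) 1, lam a < mu a)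
    (ahat : ℝ → ℝ) (h0 : ahat 0 = 0)
    (hode : ∀ t ≥ (0 : ℝ),
      HasDerivAt ahat ((1 - ahat t) * lam (ahat t) - ahat t * mu (ahat t)) t) :
    ∀ t ≥ (0 : ℝ), ahat t < 1 / 2 := by
  by_contra hcon
  push_neg at hcon
  obtain ⟨t₀, ht₀, ht₀half⟩ := hcon
  have hcont : ∀ u ∈ Set.Icc (0:ℝ) t₀, ContinuousWithinAt ahat (Set.Icc 0 t₀) u :=
    fun u hu => (hode u hu.1).continuousAt.continuousWithinAt
  have hcontOn : ContinuousOn ahat (Set.Icc 0 t₀) := hcont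
  -- first crossing time
  set T : Set ℝ := Set.Icc 0 t₀ ∩ ahat ⁻¹' {1/2} with hT
  have hTne : T.Nonempty := by
    have : (1/2 : ℝ) ∈ Set.Icc (ahat 0) (ahat t₀) := by
      constructor
      · rw [h0]; norm_num
      · exact ht₀half
    obtain ⟨v, hv, hv2⟩ := intermediate_value_Icc ht₀ hcontOn this
    exact ⟨v, hv, hv2⟩
  have hTclosed : IsClosed T :=
    hcontOn.preimage_isClosed_of_isClosed isClosed_Icc isClosed_singleton
  have hTbdd : BddBelow T := ⟨0, fun x hx => hx.1.1⟩
  set s := sInf T with hs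
  have hsT : s ∈ T := hTclosed.csInf_mem hTne hTbdd
  have hs0 : (0:ℝ) ≤ s := hsT.1.1
  have hshalf : ahat s = 1/2 := hsT.2
  have hspos : 0 < s := by
    rcases lt_or_eq_of_le hs0 with h | h
    · exact h
    · exfalso; rw [← h] at hshalf; rw [h0] at hshalf; norm_num at hshalf
  -- before s, ahat < 1/2
  have hbefore : ∀ u ∈ Set.Ico (0:ℝ) s, ahat u < 1/2 := by
    intro u hu
    have hune : ahat u ≠ 1/2 := by
      intro heq
      have : u ∈ T := ⟨⟨hu.1, hu.2.le.trans hsT.1.2⟩, heq⟩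
      exact absurd (csInf_le hTbdd this) (not_le.mpr hu.2)
    rcases lt_or_gt_of_ne hune with h | h
    · exact h
    · exfalso
      have hcontOn' : ContinuousOn ahat (Set.Icc 0 u) :=
        hcontOn.mono (Set.Icc_subset_Icc le_rfl (hu.2.le.trans hsT.1.2))
      have hmem : (1/2:ℝ) ∈ Set.Icc (ahat 0) (ahat u) := by
        constructor
        · rw [h0]; norm_num
        · exact h.le
      obtain ⟨v, hv, hv2⟩ := intermediate_value_Icc hu.1 hcontOn' hmem
      have hvT : v ∈ T := ⟨⟨hv.1, hv.2.trans (hu.2.le.trans hsT.1.2)⟩, hv2⟩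
      have : s ≤ v := csInf_le hTbdd hvT
      exact absurd (this.trans hv.2) (not_le.mpr hu.2)
  -- derivative at s is negative
  have hd := hode s hs0
  rw [hshalf] at hd
  have hdneg : (1 - 1/2) * lam (1/2) - 1/2 * mu (1/2) < 0 := by
    have := hlt (1/2) ⟨by norm_num, by norm_num⟩
    nlinarith
  -- slope argument
  have hslope := hasDerivAt_iff_tendsto_slope.mp hd
  have hslope' : Filter.Tendsto (slope ahat s) (nhdsWithin s (Set.Iio s))
      (nhds ((1 - 1/2) * lam (1/2) - 1/2 * mu (1/2))) :=
    hslope.mono_left (nhdsWithin_mono _ (fun x hx => ne_of_lt hx))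
  have h1 : ∀ᶠ u in nhdsWithin s (Set.Iio s), slope ahat s u < 0 :=
    hslope'.eventually_lt_const hdneg
  have h2 : ∀ᶠ u in nhdsWithin s (Set.Iio s), u ∈ Set.Ioo 0 s :=
    Ioo_mem_nhdsLT_of_mem ⟨hspos, le_rfl⟩
  obtain ⟨u, hu1, hu2⟩ := (h1.and h2).exists
  have hus : u - s < 0 := sub_neg.mpr hu2.2
  rw [slope_def_field, div_neg_iff] at hu1
  have hub := hbefore u ⟨hu2.1.le, hu2.2⟩
  rcases hu1 with ⟨h, _⟩ | ⟨_, h⟩ <;> linarith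
end

section
/- Fix an integer k ≥ 1 and continuous functions Λ, M : [0,∞) → [0,∞), and let p₀, …, p_k : [0,∞) → ℝ be the solution of the absorbing forward system with p₀(0) = 1 and p_j(0) = 0 for 1 ≤ j ≤ k. Let T be a random variable on a probability space with values in [0,∞) whose distribution function satisfies ℙ(T ≤ t) = p_k(t) for all t ≥ 0. Then for every t ≥ 0 with p_k(t) < 1, the hazard rate of T at t exists and satisfies m_k(t) := lim_{Δ → 0⁺} (1/Δ) · ℙ(T ≤ t + Δ | T ≥ t) = Λ(t) · p_{k−1}(t) / (1 − p_k(t)). -/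
/-- The right-hand side of the absorbing forward system (system (3.3) of the paper) for
`k` key nodes, activation rate `Λ`, deactivation rate `M`, state probabilities `p`,
component `j`, at time `t`:
* `p_k' = Λ p_{k-1}` (absorbing state);
* for `0 ≤ j ≤ k-1`:
  `p_j' = (k-j+1) Λ p_{j-1} + (j+1) M p_{j+1} 𝟙{j+1 ≠ k} - ((k-j) Λ + j M) p_j`,
  with the convention `p_{-1} ≡ 0` (no inflow from `S_k` back to `S_{k-1}`).
This reproduces exactly the equations of Theorem 3.3: for `k ≥ 2`,
`p_0' = M p_1 - k Λ p_0`; for `k = 1`, `p_0' = -Λ p_0`; for `1 ≤ j ≤ k-2` the interior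
equation; and `p_{k-1}' = 2 Λ p_{k-2} - (Λ + (k-1) M) p_{k-1}` for `k ≥ 2`. -/
def forwardRate (k : ℕ) (Λ M : ℝ → ℝ) (p : ℕ → ℝ → ℝ) (j : ℕ) (t : ℝ) : ℝ :=
  if j = k then Λ t * p (k - 1) t
  else
    (if j = 0 then 0 else ((k : ℝ) - (j : ℝ) + 1) * Λ t * p (j - 1) t)
    + (if j + 1 = k then 0 else ((j : ℝ) + 1) * M t * p (j + 1) t)
    - (((k : ℝ) - (j : ℝ)) * Λ t + (j : ℝ) * M t) * p j t

/-- `p` is a solution of the absorbing forward system with `k` key nodes and rates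
`Λ, M`, with initial conditions `p_0(0) = 1` and `p_j(0) = 0` for `1 ≤ j ≤ k`. -/
def IsForwardSolution (k : ℕ) (Λ M : ℝ → ℝ) (p : ℕ → ℝ → ℝ) : Prop :=
  p 0 0 = 1 ∧ (∀ j, 1 ≤ j → j ≤ k → p j 0 = 0) ∧
  ∀ j ≤ k, ∀ t ≥ (0 : ℝ), HasDerivAt (p j) (forwardRate k Λ M p j t) t


open MeasureTheory in
/-- Let `p` solve the absorbing forward system and let `T` be a
nonnegative random variable with distribution function `ℙ(T ≤ t) = p_k(t)` for `t ≥ 0`.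
Then for every `t ≥ 0` with `p_k(t) < 1`, the hazard rate of `T` at `t` exists and
`m_k(t) = lim_{Δ→0⁺} (1/Δ) ℙ(T ≤ t + Δ | T ≥ t) = Λ(t) p_{k-1}(t) / (1 - p_k(t))`. -/
theorem hazard_rate_key_nodes
    (k : ℕ) (hk : 1 ≤ k) (Λ M : ℝ → ℝ)
    (hΛc : ContinuousOn Λ (Set.Ici 0)) (hMc : ContinuousOn M (Set.Ici 0))
    (hΛnn : ∀ t ≥ (0 : ℝ), 0 ≤ Λ t) (hMnn : ∀ t ≥ (0 : ℝ), 0 ≤ M t)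
    (p : ℕ → ℝ → ℝ) (hp : IsForwardSolution k Λ M p)
    (Ω : Type*) [MeasurableSpace Ω] (μ : Measure Ω) [IsProbabilityMeasure μ]
    (T : Ω → ℝ) (hT : Measurable T) (hTnn : ∀ ω, 0 ≤ T ω)
    (hcdf : ∀ t ≥ (0 : ℝ), (μ {ω | T ω ≤ t}).toReal = p k t) :
    ∀ t ≥ (0 : ℝ), p k t < 1 →
      Filter.Tendsto
        (fun Δ : ℝ => (1 / Δ) *
          ((μ {ω | T ω ≤ t + Δ ∧ t ≤ T ω}).toReal / (μ {ω | t ≤ T ω}).toReal))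
        (nhdsWithin 0 (Set.Ioi 0))
        (nhds (Λ t * p (k - 1) t / (1 - p k t))) := by
  intro t ht hpk1
  obtain ⟨hp0, hpinit, hpode⟩ := hp
  -- derivative of p k
  have hd : HasDerivAt (p k) (Λ t * p (k - 1) t) t := by
    have := hpode k le_rfl t ht
    simpa [forwardRate] using this
  -- μ {T < s} = p k s for s ≥ 0
  have hlt : ∀ s ≥ (0 : ℝ), (μ {ω | T ω < s}).toReal = p k s := by
    intro s hs
    rcases eq_or_lt_of_le hs with h0 | h0
    · have hempty : {ω | T ω < s} = (∅ : Set Ω) := by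
        ext ω; simp only [Set.mem_setOf_eq, Set.mem_empty_iff_false, iff_false, not_lt, ← h0]
        exact hTnn ω
      rw [hempty, measure_empty, ← h0]
      simpa using (hpinit k hk le_rfl).symm
    · -- s > 0
      have hds : HasDerivAt (p k) (forwardRate k Λ M p k s) s := hpode k le_rfl s hs
      have hconts : ContinuousAt (p k) s := hds.continuousAt
      apply le_antisymm
      · rw [← hcdf s hs]
        exact ENNReal.toReal_mono (measure_ne_top μ _)
          (measure_mono (fun ω hω => (le_of_lt hω : T ω ≤ s)))
      · have htend : Filter.Tendsto (p k) (nhdsWithin s (Set.Iio s))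
            (nhds (p k s)) := hconts.tendsto.mono_left nhdsWithin_le_nhds
        refine le_of_tendsto htend ?_
        filter_upwards [Ioo_mem_nhdsLT_of_mem (Set.mem_Ioc.mpr ⟨h0, le_rfl⟩)] with r hr
        rw [← hcdf r (le_of_lt hr.1)]
        exact ENNReal.toReal_mono (measure_ne_top μ _)
          (measure_mono (fun ω hω => lt_of_le_of_lt hω hr.2))
  have hmlt : MeasurableSet {ω | T ω < t} := hT measurableSet_Iio
  -- μ {t ≤ T} = 1 - p k t
  have hsurv : (μ {ω | t ≤ T ω}).toReal = 1 - p k t := by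
    have hcompl : {ω | t ≤ T ω} = {ω | T ω < t}ᶜ := by
      ext ω; simp [not_lt]
    rw [hcompl, measure_compl hmlt (measure_ne_top μ _), measure_univ,
      ENNReal.toReal_sub_of_le prob_le_one ENNReal.one_ne_top,
      ENNReal.toReal_one, hlt t ht]
  -- numerator for Δ > 0
  have hnum : ∀ Δ > (0 : ℝ),
      (μ {ω | T ω ≤ t + Δ ∧ t ≤ T ω}).toReal = p k (t + Δ) - p k t := by
    intro Δ hΔ
    have hset : {ω | T ω ≤ t + Δ ∧ t ≤ T ω} = {ω | T ω ≤ t + Δ} \ {ω | T ω < t} := by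
      ext ω; simp [Set.mem_diff, not_lt, and_comm]
    have hsub : {ω | T ω < t} ⊆ {ω | T ω ≤ t + Δ} := fun ω (hω : T ω < t) =>
      show T ω ≤ t + Δ by linarith
    rw [hset, measure_diff hsub hmlt.nullMeasurableSet (measure_ne_top μ _),
      ENNReal.toReal_sub_of_le (measure_mono hsub) (measure_ne_top μ _),
      hcdf (t + Δ) (by linarith), hlt t ht]
  -- the slope limit
  have hslope : Filter.Tendsto (fun Δ : ℝ => (p k (t + Δ) - p k t) / Δ)
      (nhdsWithin 0 (Set.Ioi 0)) (nhds (Λ t * p (k - 1) t)) := by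
    have h1 : Filter.Tendsto (slope (p k) t) (nhdsWithin t {t}ᶜ)
        (nhds (Λ t * p (k - 1) t)) := hasDerivAt_iff_tendsto_slope.mp hd
    have h2 : Filter.Tendsto (fun Δ : ℝ => t + Δ) (nhdsWithin 0 (Set.Ioi 0))
        (nhdsWithin t {t}ᶜ) := by
      rw [tendsto_nhdsWithin_iff]
      constructor
      · have : Filter.Tendsto (fun Δ : ℝ => t + Δ) (nhds 0) (nhds (t + 0)) :=
          (continuous_const.add continuous_id).tendsto 0
        simpa using this.mono_left nhdsWithin_le_nhds
      · filter_upwards [self_mem_nhdsWithin] with Δ (hΔ : 0 < Δ)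
        simp only [Set.mem_compl_iff, Set.mem_singleton_iff]
        intro h; linarith [hΔ, congrArg (fun x => x - t) h]
    have h3 := h1.comp h2
    refine h3.congr' ?_
    filter_upwards [self_mem_nhdsWithin] with Δ (hΔ : 0 < Δ)
    simp only [Function.comp_apply, slope_def_field, add_sub_cancel_left]
  -- assemble
  have hfin : Filter.Tendsto
      (fun Δ : ℝ => ((p k (t + Δ) - p k t) / Δ) / (1 - p k t))
      (nhdsWithin 0 (Set.Ioi 0)) (nhds (Λ t * p (k - 1) t / (1 - p k t))) :=
    hslope.div_const _
  refine hfin.congr' ?_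
  filter_upwards [self_mem_nhdsWithin] with Δ (hΔ : (0 : ℝ) < Δ)
  rw [hnum Δ hΔ, hsurv]
  field_simp
end

section
/- Fix continuous functions Λ, M : [0,∞) → [0,∞). For each integer k ≥ 1, let p^{(k)} = (p^{(k)}₀, …, p^{(k)}_k) be the solution of the absorbing forward system with k key nodes, rates Λ and M, and initial conditions p^{(k)}₀(0) = 1, p^{(k)}_j(0) = 0 for 1 ≤ j ≤ k. Then for every k ≥ 1 and every t ≥ 0, the absorption probabilities are monotone in k: p^{(k+1)}_{k+1}(t) ≤ p^{(k)}_k(t). Consequently ∫₀^∞ (1 − p^{(k)}_k(t)) dt ≤ ∫₀^∞ (1 − p^{(k+1)}_{k+1}(t)) dt, i.e. the expected activation time E[τ_k] is nondecreasing in k. -/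
/-!
Write `p`, `q` for the solutions with `k` and `k + 1` key nodes. The claim is the case `j = k` of
`D j ≥ 0`, where `D j = ∑_{i ≥ j} p i - ∑_{i ≥ j + 1} q i` for `0 ≤ j ≤ k`. A tail mass changes
only by the flux across its lower cut, `(∑_{i > j} p i)' = (k - j) Λ p j - (j + 1) M p (j + 1)`,
so `D j'` is a nonnegative combination of `D (j - 1) - D j` and `D (j + 1) - D j` plus
`M p j ≥ 0`, while `D 0 = q 0 ≥ 0` by conservation of mass. Hence `D' ≥ 0` at a coordinate where
`D` attains a negative minimum, and an exponential barrier argument for such quasimonotone systems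
keeps `D` nonnegative. The same principle, with a constant coming from bounds on `Λ` and `M` over
a compact time interval, gives `p ≥ 0`.
-/

open Set Filter Topology

theorem pos_of_deriv_pos_boundary {ι : Type*} [Finite ι] {y y' : ι → ℝ → ℝ} {T : ℝ}
    (hy : ∀ i, ∀ t ∈ Icc 0 T, HasDerivAt (y i) (y' i t) t) (h0 : ∀ i, 0 < y i 0)
    (hzero : ∀ t ∈ Icc 0 T, ∀ i, y i t = 0 → (∀ j, 0 ≤ y j t) → 0 < y' i t) :
    ∀ t ∈ Icc 0 T, ∀ i, 0 < y i t := by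
  by_contra! hbad
  obtain ⟨s, hs, i, hi⟩ := hbad
  set B := ⋃ i, Icc 0 T ∩ y i ⁻¹' Iic 0
  have hB : IsCompact B := isCompact_Icc.of_isClosed_subset
    (isClosed_iUnion_of_finite fun i => ContinuousOn.preimage_isClosed_of_isClosed
      (fun t ht => (hy i t ht).continuousAt.continuousWithinAt) isClosed_Icc isClosed_Iic)
    (iUnion_subset fun _ => inter_subset_left)
  obtain ⟨t₀, ht₀B, ht₀least⟩ := hB.exists_isLeast ⟨s, mem_iUnion.2 ⟨i, hs, hi⟩⟩
  obtain ⟨i₀, ht₀, hyt₀⟩ := mem_iUnion.1 ht₀B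
  have ht₀pos : 0 < t₀ := ht₀.1.lt_of_ne fun h => (h0 i₀).not_ge (h ▸ hyt₀)
  have hbefore : ∀ j, ∀ᶠ s in 𝓝[<] t₀, 0 < y j s := fun j =>
    eventually_of_mem (Ioo_mem_nhdsLT ht₀pos) fun s hs => not_le.1 fun h =>
      hs.2.not_ge (ht₀least (mem_iUnion.2 ⟨j, ⟨hs.1.le, hs.2.le.trans ht₀.2⟩, h⟩))
  have hat : ∀ j, 0 ≤ y j t₀ := fun j =>
    ge_of_tendsto ((hy j t₀ ht₀).continuousAt.tendsto.mono_left nhdsWithin_le_nhds)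
      ((hbefore j).mono fun _ => le_of_lt)
  have hzero₀ : y i₀ t₀ = 0 := le_antisymm hyt₀ (hat i₀)
  have hslope : y' i₀ t₀ ≤ 0 :=
    le_of_tendsto (hasDerivAt_iff_tendsto_slope_left_right.1 (hy i₀ t₀ ht₀)).1 <|
      (hbefore i₀).and self_mem_nhdsWithin |>.mono fun s ⟨hpos, hlt⟩ => by
        rw [slope_def_field, hzero₀, sub_zero]
        exact div_nonpos_of_nonneg_of_nonpos hpos.le (sub_nonpos.2 (le_of_lt hlt))
  exact (hzero t₀ ht₀ i₀ hzero₀ hat).not_ge hslope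

theorem nonneg_of_quasimonotone {ι : Type*} [Finite ι] {x x' : ι → ℝ → ℝ} {T K : ℝ}
    (hx : ∀ i, ∀ t ∈ Icc 0 T, HasDerivAt (x i) (x' i t) t) (h0 : ∀ i, 0 ≤ x i 0)
    (hmin : ∀ t ∈ Icc 0 T, ∀ i, x i t < 0 → (∀ j, x i t ≤ x j t) → K * x i t ≤ x' i t) :
    ∀ t ∈ Icc 0 T, ∀ i, 0 ≤ x i t := by
  intro t ht i
  refine le_of_forall_pos_lt_add fun δ hδ => ?_
  -- the barrier equals `δ` at time `t` and grows fast enough to beat the lower bound `K * x i`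
  set b : ℝ → ℝ := fun s => δ * Real.exp ((K + 1) * (s - t))
  have hb : ∀ s, HasDerivAt b ((K + 1) * b s) s := fun s =>
    ((((hasDerivAt_id s).sub_const t).const_mul (K + 1)).exp.const_mul δ).congr_deriv
      (by simp only [b, id]; ring)
  have hbpos : ∀ s, 0 < b s := fun s => by positivity
  have hpos := pos_of_deriv_pos_boundary (y := fun i s => x i s + b s)
    (fun i s hs => (hx i s hs).add (hb s)) (fun i => add_pos_of_nonneg_of_pos (h0 i) (hbpos 0))
    (fun s hs j hj hall => by
      have hxj : x j s = -b s := by linarith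
      have hK := hmin s hs j (by linarith [hbpos s]) fun l => by linarith [hall l]
      rw [hxj] at hK
      nlinarith [hbpos s]) t ht i
  simpa [b] using hpos

theorem Finset.sum_Icc_eq_add_sum_Icc_succ {M : Type*} [AddCommMonoid M] (f : ℕ → M) {j k : ℕ}
    (h : j ≤ k) : ∑ i ∈ Finset.Icc j k, f i = f j + ∑ i ∈ Finset.Icc (j + 1) k, f i := by
  rw [Finset.Icc_add_one_left_eq_Ioc, Finset.add_sum_Ioc_eq_sum_Icc h]

section ForwardSystem

variable {k : ℕ} {Λ M : ℝ → ℝ} {p q : ℕ → ℝ → ℝ}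

theorem sum_forwardRate_Icc_succ (t : ℝ) {j : ℕ} (hj : j < k) :
    ∑ i ∈ Finset.Icc (j + 1) k, forwardRate k Λ M p i t
      = ((k : ℝ) - j) * Λ t * p j t
        - (if j + 1 = k then 0 else ((j : ℝ) + 1) * M t * p (j + 1) t) := by
  obtain ⟨n, hn⟩ : ∃ n, k = j + 1 + n := ⟨k - (j + 1), by omega⟩
  induction n generalizing j with
  | zero => subst hn; simp [forwardRate]
  | succ n ih =>
    rw [Finset.sum_Icc_eq_add_sum_Icc_succ _ (by omega), ih (by omega) (by omega)]
    simp only [forwardRate, if_neg (show j + 1 ≠ k by omega), if_neg (Nat.succ_ne_zero j),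
      Nat.add_sub_cancel]
    split_ifs <;> push_cast <;> ring

theorem sum_forwardRate_eq_zero (t : ℝ) (hk : 1 ≤ k) :
    ∑ i ∈ Finset.Icc 0 k, forwardRate k Λ M p i t = 0 := by
  rw [Finset.sum_Icc_eq_add_sum_Icc_succ _ (Nat.zero_le k), sum_forwardRate_Icc_succ t hk]
  simp only [forwardRate, if_neg (show 0 ≠ k by omega), zero_add]
  split_ifs <;> push_cast <;> ring

theorem forwardRate_ge_of_isMin (t : ℝ) {i : ℕ} {C : ℝ} (hi : i ≤ k) (hΛ : 0 ≤ Λ t)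
    (hΛC : Λ t ≤ C) (hM : 0 ≤ M t) (hMC : M t ≤ C) (hneg : p i t ≤ 0)
    (hmin : ∀ j ≤ k, p i t ≤ p j t) :
    2 * (k + 1) * C * p i t ≤ forwardRate k Λ M p i t := by
  have hki : (i : ℝ) ≤ k := by exact_mod_cast hi
  have hC : 0 ≤ C := hΛ.trans hΛC
  have hflow : ∀ a x : ℝ, 0 ≤ a → a ≤ (k + 1) * C → p i t ≤ x → (k + 1) * C * p i t ≤ a * x :=
    fun a x ha haC hx => by nlinarith [mul_le_mul_of_nonneg_left hx ha]
  have hzero : (k + 1) * C * p i t ≤ 0 := mul_nonpos_of_nonneg_of_nonpos (by positivity) hneg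
  by_cases hik : i = k
  · rw [forwardRate, if_pos hik]
    nlinarith [hflow (Λ t) (p (k - 1) t) hΛ (by nlinarith) (hmin _ (by omega))]
  rw [forwardRate, if_neg hik]
  have hin : (k + 1) * C * p i t ≤
      if i = 0 then 0 else ((k : ℝ) - i + 1) * Λ t * p (i - 1) t := by
    split_ifs
    · exact hzero
    · exact hflow _ _ (by nlinarith) (by nlinarith) (hmin _ (by omega))
  have hout : (k + 1) * C * p i t ≤
      if i + 1 = k then 0 else ((i : ℝ) + 1) * M t * p (i + 1) t := by
    split_ifs
    · exact hzero
    · have : (i : ℝ) + 1 ≤ k := by exact_mod_cast (show i + 1 ≤ k by omega)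
      exact hflow _ _ (by positivity) (by nlinarith) (hmin _ (by omega))
  have hdiag : 0 ≤ -(((k : ℝ) - i) * Λ t + i * M t) * p i t :=
    mul_nonneg_of_nonpos_of_nonpos (by nlinarith) hneg
  linarith

theorem sum_forwardRate_succ_le {n : ℕ} {t : ℝ} (hn : n < k) (hΛ : 0 ≤ Λ t) (hM : 0 ≤ M t)
    (hp : 0 ≤ p (n + 1) t) (hin : q (n + 1) t ≤ p n t)
    (hout : n + 1 < k → p (n + 1) t ≤ q (n + 2) t) :
    ∑ i ∈ Finset.Icc (n + 2) (k + 1), forwardRate (k + 1) Λ M q i t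
      ≤ ∑ i ∈ Finset.Icc (n + 1) k, forwardRate k Λ M p i t := by
  rw [sum_forwardRate_Icc_succ t hn, sum_forwardRate_Icc_succ t (by omega : n + 1 < k + 1)]
  have hnk : (n : ℝ) ≤ k := by exact_mod_cast hn.le
  have hin' := mul_le_mul_of_nonneg_left hin (mul_nonneg (sub_nonneg.2 hnk) hΛ)
  by_cases hlast : n + 1 = k
  · simp only [if_pos hlast, if_pos (congrArg (· + 1) hlast)]
    push_cast
    linarith
  · simp only [if_neg hlast, if_neg (show n + 1 + 1 ≠ k + 1 by omega)]
    have hout' := mul_le_mul_of_nonneg_left (hout (by omega))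
      (mul_nonneg (by positivity : (0 : ℝ) ≤ n + 2) hM)
    push_cast
    nlinarith [mul_nonneg hM hp]

end ForwardSystem

namespace IsForwardSolution

variable {k : ℕ} {Λ M : ℝ → ℝ} {p q : ℕ → ℝ → ℝ}

theorem hasDerivAt_sum (hp : IsForwardSolution k Λ M p) {s : Finset ℕ} (hs : ∀ i ∈ s, i ≤ k)
    {t : ℝ} (ht : 0 ≤ t) :
    HasDerivAt (fun t => ∑ i ∈ s, p i t) (∑ i ∈ s, forwardRate k Λ M p i t) t :=
  HasDerivAt.fun_sum fun i hi => hp.2.2 i (hs i hi) t ht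

theorem sum_Icc_apply_zero_eq_zero (hp : IsForwardSolution k Λ M p) {j : ℕ} (hj : 1 ≤ j) :
    ∑ i ∈ Finset.Icc j k, p i 0 = 0 :=
  Finset.sum_eq_zero fun i hi =>
    hp.2.1 i (hj.trans (Finset.mem_Icc.1 hi).1) (Finset.mem_Icc.1 hi).2

theorem sum_eq_one (hp : IsForwardSolution k Λ M p) (hk : 1 ≤ k) {t : ℝ} (ht : 0 ≤ t) :
    ∑ i ∈ Finset.Icc 0 k, p i t = 1 := by
  have hderiv : ∀ s ∈ Ici (0 : ℝ), HasDerivAt (fun t => ∑ i ∈ Finset.Icc 0 k, p i t) 0 s :=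
    fun s hs => by
      simpa only [sum_forwardRate_eq_zero s hk] using
        hp.hasDerivAt_sum (s := Finset.Icc 0 k) (fun i hi => (Finset.mem_Icc.1 hi).2) hs
  have hconst := constant_of_has_deriv_right_zero
    (fun s hs => (hderiv s hs.1).continuousAt.continuousWithinAt)
    (fun s hs => (hderiv s hs.1).hasDerivWithinAt) t ⟨ht, le_rfl⟩
  rw [hconst, Finset.sum_Icc_eq_add_sum_Icc_succ _ (Nat.zero_le k), hp.1,
    hp.sum_Icc_apply_zero_eq_zero le_rfl, add_zero]

theorem nonneg (hp : IsForwardSolution k Λ M p)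
    (hΛc : ContinuousOn Λ (Ici 0)) (hMc : ContinuousOn M (Ici 0))
    (hΛnn : ∀ t ≥ (0 : ℝ), 0 ≤ Λ t) (hMnn : ∀ t ≥ (0 : ℝ), 0 ≤ M t)
    {t : ℝ} (ht : 0 ≤ t) {j : ℕ} (hj : j ≤ k) : 0 ≤ p j t := by
  have hsub : Icc 0 t ⊆ Ici (0 : ℝ) := Icc_subset_Ici_self
  obtain ⟨CΛ, hCΛ⟩ := isCompact_Icc.exists_bound_of_continuousOn (hΛc.mono hsub)
  obtain ⟨CM, hCM⟩ := isCompact_Icc.exists_bound_of_continuousOn (hMc.mono hsub)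
  have hbound : ∀ s ∈ Icc 0 t, Λ s ≤ max CΛ CM ∧ M s ≤ max CΛ CM := fun s hs =>
    ⟨(le_abs_self _).trans ((hCΛ s hs).trans (le_max_left _ _)),
      (le_abs_self _).trans ((hCM s hs).trans (le_max_right _ _))⟩
  refine nonneg_of_quasimonotone (x := fun i : Fin (k + 1) => p i)
    (fun i s hs => hp.2.2 i (Nat.lt_succ_iff.1 i.2) s hs.1) (fun i => ?_)
    (fun s hs i hneg hmin => forwardRate_ge_of_isMin s (Nat.lt_succ_iff.1 i.2) (hΛnn s hs.1)
      (hbound s hs).1 (hMnn s hs.1) (hbound s hs).2 hneg.le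
      fun j hj => hmin ⟨j, Nat.lt_succ_of_le hj⟩) t ⟨ht, le_rfl⟩ ⟨j, Nat.lt_succ_of_le hj⟩
  rcases Nat.eq_zero_or_pos i with h | h
  · simp [h, hp.1]
  · simp [hp.2.1 i h (Nat.lt_succ_iff.1 i.2)]

theorem sum_Icc_succ_le_sum_Icc (hp : IsForwardSolution k Λ M p)
    (hq : IsForwardSolution (k + 1) Λ M q) (hk : 1 ≤ k)
    (hΛc : ContinuousOn Λ (Ici 0)) (hMc : ContinuousOn M (Ici 0))
    (hΛnn : ∀ t ≥ (0 : ℝ), 0 ≤ Λ t) (hMnn : ∀ t ≥ (0 : ℝ), 0 ≤ M t)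
    {t : ℝ} (ht : 0 ≤ t) {j : ℕ} (hj : j ≤ k) :
    ∑ i ∈ Finset.Icc (j + 1) (k + 1), q i t ≤ ∑ i ∈ Finset.Icc j k, p i t := by
  set D : ℕ → ℝ → ℝ := fun j s =>
    ∑ i ∈ Finset.Icc j k, p i s - ∑ i ∈ Finset.Icc (j + 1) (k + 1), q i s
  have hstep : ∀ j < k, ∀ s, D j s = p j s - q (j + 1) s + D (j + 1) s := fun j hj s => by
    simp only [D, Finset.sum_Icc_eq_add_sum_Icc_succ _ hj.le,
      Finset.sum_Icc_eq_add_sum_Icc_succ (fun i => q i s) (show j + 1 ≤ k + 1 by omega)]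
    ring
  have hD0 : ∀ s ≥ 0, D 0 s = q 0 s := fun s hs => by
    have := Finset.sum_Icc_eq_add_sum_Icc_succ (fun i => q i s) (Nat.zero_le (k + 1))
    simp only [D, hp.sum_eq_one hk hs]
    linarith [hq.sum_eq_one (by omega) hs]
  refine sub_nonneg.1 <| nonneg_of_quasimonotone (x := fun j : Fin (k + 1) => D j) (K := 0)
    (fun i s hs => (hp.hasDerivAt_sum (fun l hl => (Finset.mem_Icc.1 hl).2) hs.1).sub
      (hq.hasDerivAt_sum (fun l hl => (Finset.mem_Icc.1 hl).2) hs.1))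
    (fun i => ?_) (fun s hs i hneg hmin => ?_) t ⟨ht, le_rfl⟩ ⟨j, Nat.lt_succ_of_le hj⟩
  · simp only [D, hq.sum_Icc_apply_zero_eq_zero (Nat.le_add_left 1 i), sub_zero]
    exact Finset.sum_nonneg fun l hl =>
      hp.nonneg hΛc hMc hΛnn hMnn le_rfl (Finset.mem_Icc.1 hl).2
  obtain ⟨m, hm⟩ := i
  have hmin' : ∀ j ≤ k, D m s ≤ D j s := fun j hj => hmin ⟨j, Nat.lt_succ_of_le hj⟩
  obtain _ | n := m
  · exact absurd (hD0 s hs.1 ▸ hneg)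
      (not_lt.2 (hq.nonneg hΛc hMc hΛnn hMnn hs.1 (Nat.zero_le _)))
  rw [zero_mul, sub_nonneg]
  refine sum_forwardRate_succ_le (by omega) (hΛnn s hs.1) (hMnn s hs.1)
    (hp.nonneg hΛc hMc hΛnn hMnn hs.1 (by omega)) ?_ fun hnk => ?_
  · linarith [hstep n (by omega) s, hmin' n (by omega)]
  · linarith [hstep (n + 1) hnk s, hmin' (n + 2) hnk]

end IsForwardSolution

/-- Fix continuous nonnegative rates `Λ, M` on `[0,∞)` and, for each
`k ≥ 1`, let `P k` be the solution of the absorbing forward system with `k` key nodes.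
Then for every `k ≥ 1` and every `t ≥ 0` the absorption probabilities are monotone in
`k`: `p^{(k+1)}_{k+1}(t) ≤ p^{(k)}_k(t)`; consequently
`∫₀^∞ (1 - p^{(k)}_k(t)) dt ≤ ∫₀^∞ (1 - p^{(k+1)}_{k+1}(t)) dt` (in `[0,∞]`), i.e.
the expected activation time `E[τ_k]` is nondecreasing in `k`. -/
theorem absorption_probability_monotone_in_k
    (Λ M : ℝ → ℝ)
    (hΛc : ContinuousOn Λ (Set.Ici 0)) (hMc : ContinuousOn M (Set.Ici 0))
    (hΛnn : ∀ t ≥ (0 : ℝ), 0 ≤ Λ t) (hMnn : ∀ t ≥ (0 : ℝ), 0 ≤ M t)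
    (P : ℕ → ℕ → ℝ → ℝ)
    (hP : ∀ k, 1 ≤ k → IsForwardSolution k Λ M (P k)) :
    ∀ k, 1 ≤ k →
      (∀ t ≥ (0 : ℝ), P (k + 1) (k + 1) t ≤ P k k t) ∧
      (∫⁻ t in Set.Ici (0 : ℝ), ENNReal.ofReal (1 - P k k t))
        ≤ ∫⁻ t in Set.Ici (0 : ℝ), ENNReal.ofReal (1 - P (k + 1) (k + 1) t) := by
  intro k hk
  have hmono : ∀ t ≥ (0 : ℝ), P (k + 1) (k + 1) t ≤ P k k t := fun t ht => by
    simpa using (hP k hk).sum_Icc_succ_le_sum_Icc (hP (k + 1) (by omega)) hk hΛc hMc hΛnn hMnn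
      ht le_rfl
  exact ⟨hmono, MeasureTheory.setLIntegral_mono' measurableSet_Ici fun t ht =>
    ENNReal.ofReal_le_ofReal (by linarith [hmono t ht])⟩
end
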